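/- arXiv:2009.14495 — 3 statements merged into one kernel-verified Lean document; each statement's English description precedes it below -/
import Mathlib

section
/- Consider s ≥ 2 agents with differentiable discrete Lagrangians L_i^d : ℝ^n × ℝ^n → ℝ, differentiable discrete potentials V_ij^d : ℝ^n × ℝ^n → ℝ defined for j ∈ N_i and satisfying V_ij^d(x,y) = V_ji^d(y,x), and discrete forces F_{ij,d}^−, F_{ij,d}^+ : ℝ^n × ℝ^n × ℝ^n × ℝ^n → ℝ^n. Let N ≥ 2 and let q_k = (q_k^1,…,q_k^s) ∈ (ℝ^n)^s for k = 0,…,N. Then the following are equivalent: (i) for every choice of δ_k = (δ_k^1,…,δ_k^s) ∈ (ℝ^n)^s, k = 0,…,N, with δ_0 = δ_N = 0, one has Σ_{k=0}^{N−1} Σ_{i=1}^{s} [ D₁L_i^d(q_k^i,q_{k+1}^i)·δ_k^i + D₂L_i^d(q_k^i,q_{k+1}^i)·δ_{k+1}^i − (1/2) Σ_{j∈N_i} ( D₁V_ij^d(q_k^i,q_k^j)·δ_k^i + D₂V_ij^d(q_k^i,q_k^j)·δ_k^j ) + Σ_{j∈N_i} ( F_{ij,d}^−(q_k^i,q_k^j,q_{k+1}^i,q_{k+1}^j)·δ_k^i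 + F_{ij,d}^+(q_k^i,q_k^j,q_{k+1}^i,q_{k+1}^j)·δ_{k+1}^i ) ] = 0; (ii) for every k = 1,…,N−1 and every i = 1,…,s: D₂L_i^d(q_{k−1}^i,q_k^i) + D₁L_i^d(q_k^i,q_{k+1}^i) − Σ_{j∈N_i} D₁V_ij^d(q_k^i,q_k^j) + Σ_{j∈N_i} ( F_{ij,d}^+(q_{k−1}^i,q_{k−1}^j,q_k^i,q_k^j) + F_{ij,d}^−(q_k^i,q_k^j,q_{k+1}^i,q_{k+1}^j) ) = 0. -/
/-!
Each term of the varied action sum pairs `δ k` and `δ (k+1)` with explicit coefficients; shifting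
the index of the `δ (k+1)` part (summation by parts, with no boundary terms since
`δ 0 = δ N = 0`) turns the variation into `∑ k ∈ Ico 1 N, ∑ i, ⟪EL k i, δ k i⟫`, where `EL` is the
forced discrete Euler–Lagrange expression. The factor `1/2` disappears because, by the symmetry of
the neighbour relation and of the potentials, the two halves of the potential term are equal.
Variations supported at a single time then show that this vanishes for all admissible `δ` iff
`EL` vanishes at all interior times.
-/

open Finset
open scoped RealInnerProductSpace

theorem Finset.sum_range_add_succ_eq_sum_Ico_one {M : Type*} [AddCommMonoid M] {u w : ℕ → M}
    {N : ℕ} (hu : u 0 = 0) (hw : w N = 0) :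
    ∑ k ∈ range N, (u k + w (k + 1)) = ∑ k ∈ Ico 1 N, (u k + w k) := by
  rcases N.eq_zero_or_pos with rfl | hN
  · simp
  have hu' : ∑ k ∈ range N, u k = ∑ k ∈ Ico 1 N, u k := by
    rw [sum_range_eq_add_Ico _ hN, hu, zero_add]
  have hw' : ∑ k ∈ range N, w (k + 1) = ∑ k ∈ Ico 1 N, w k := by
    rw [range_eq_Ico, sum_Ico_add', zero_add, sum_Ico_succ_top hN, hw, add_zero]
  rw [sum_add_distrib, sum_add_distrib, hu', hw']

theorem Finset.sum_sum_comm_of_symmetric {ι M : Type*} [Fintype ι] [AddCommMonoid M]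
    {Nb : ι → Finset ι} (hNb : ∀ i j, j ∈ Nb i ↔ i ∈ Nb j) (f : ι → ι → M) :
    ∑ i, ∑ j ∈ Nb i, f i j = ∑ i, ∑ j ∈ Nb i, f j i :=
  sum_comm' fun i j => by simp [hNb i j]

theorem forall_sum_Ico_inner_eq_zero_iff {ι F : Type*} [Fintype ι] [NormedAddCommGroup F]
    [InnerProductSpace ℝ F] (E : ℕ → ι → F) (N : ℕ) :
    (∀ δ : ℕ → ι → F, δ 0 = 0 → δ N = 0 → ∑ k ∈ Ico 1 N, ∑ i, ⟪E k i, δ k i⟫ = 0) ↔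
      ∀ k ∈ Ico 1 N, ∀ i, E k i = 0 := by
  refine ⟨fun H k hk => ?_, fun H δ _ _ => sum_eq_zero fun k hk => sum_eq_zero fun i _ => by
    rw [H k hk i, inner_zero_left]⟩
  obtain ⟨hk1, hkN⟩ := mem_Ico.mp hk
  have hEk : ∑ i, ⟪E k i, E k i⟫ = 0 := by
    have := H (fun k' => if k' = k then E k else 0) (if_neg (by omega)) (if_neg (by omega))
    rwa [sum_eq_single_of_mem k hk fun k' _ hk' => by simp [hk'], if_pos rfl] at this
  exact fun i => inner_self_eq_zero.mp <|
    (sum_eq_zero_iff_of_nonneg fun i _ => real_inner_self_nonneg).mp hEk i (mem_univ i)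

namespace DiscreteMultiAgent

noncomputable section

variable {ι E : Type*} [NormedAddCommGroup E] [InnerProductSpace ℝ E] [CompleteSpace E]
  (Nb : ι → Finset ι) (Ld : ι → E × E → ℝ) (Vd : ι → ι → E × E → ℝ)
  (Fm Fp : ι → ι → E × E × E × E → E) (q : ℕ → ι → E)

def forcedDiscreteEL (k : ℕ) (i : ι) : E :=
  gradient (fun y => Ld i (q (k-1) i, y)) (q k i)
    + gradient (fun x => Ld i (x, q (k+1) i)) (q k i)
    - ∑ j ∈ Nb i, gradient (fun x => Vd i j (x, q k j)) (q k i)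
    + ∑ j ∈ Nb i,
        (Fp i j (q (k-1) i, q (k-1) j, q k i, q k j)
          + Fm i j (q k i, q k j, q (k+1) i, q (k+1) j))

/-- The coefficient of `δ k i` in the `k`-th term of the varied action sum, once the potential
term has been symmetrised. -/
def forwardCoeff (k : ℕ) (i : ι) : E :=
  gradient (fun x => Ld i (x, q (k+1) i)) (q k i)
    - ∑ j ∈ Nb i, gradient (fun x => Vd i j (x, q k j)) (q k i)
    + ∑ j ∈ Nb i, Fm i j (q k i, q k j, q (k+1) i, q (k+1) j)

/-- The coefficient of `δ k i` in the `(k - 1)`-th term of the varied action sum. -/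
def backwardCoeff (k : ℕ) (i : ι) : E :=
  gradient (fun y => Ld i (q (k-1) i, y)) (q k i)
    + ∑ j ∈ Nb i, Fp i j (q (k-1) i, q (k-1) j, q k i, q k j)

theorem forcedDiscreteEL_eq_backwardCoeff_add_forwardCoeff (k : ℕ) (i : ι) :
    forcedDiscreteEL Nb Ld Vd Fm Fp q k i =
      backwardCoeff Nb Ld Fp q k i + forwardCoeff Nb Ld Vd Fm q k i := by
  simp only [forcedDiscreteEL, backwardCoeff, forwardCoeff, sum_add_distrib]
  abel

variable [Fintype ι]

def actionVariationStep (δ : ℕ → ι → E) (k : ℕ) : ℝ :=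
  ∑ i, (⟪gradient (fun x => Ld i (x, q (k+1) i)) (q k i), δ k i⟫
    + ⟪gradient (fun y => Ld i (q k i, y)) (q (k+1) i), δ (k+1) i⟫
    - (1/2) * ∑ j ∈ Nb i,
        (⟪gradient (fun x => Vd i j (x, q k j)) (q k i), δ k i⟫
          + ⟪gradient (fun y => Vd i j (q k i, y)) (q k j), δ k j⟫)
    + ∑ j ∈ Nb i,
        (⟪Fm i j (q k i, q k j, q (k+1) i, q (k+1) j), δ k i⟫
          + ⟪Fp i j (q k i, q k j, q (k+1) i, q (k+1) j), δ (k+1) i⟫))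

variable {Nb Vd}

theorem sum_inner_gradient_snd_eq_sum_inner_gradient_fst
    (hNb : ∀ i j, j ∈ Nb i ↔ i ∈ Nb j) (hV : ∀ i j, j ∈ Nb i → ∀ x y, Vd i j (x, y) = Vd j i (y, x))
    (x δ : ι → E) :
    ∑ i, ∑ j ∈ Nb i, ⟪gradient (fun y => Vd i j (x i, y)) (x j), δ j⟫ =
      ∑ i, ∑ j ∈ Nb i, ⟪gradient (fun y => Vd i j (y, x j)) (x i), δ i⟫ := by
  calc ∑ i, ∑ j ∈ Nb i, ⟪gradient (fun y => Vd i j (x i, y)) (x j), δ j⟫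
      = ∑ i, ∑ j ∈ Nb i, ⟪gradient (fun y => Vd j i (y, x i)) (x j), δ j⟫ :=
        sum_congr rfl fun i _ => sum_congr rfl fun j hj => by
          simp only [hV i j hj]
    _ = _ := sum_sum_comm_of_symmetric hNb _

theorem actionVariationStep_eq (hNb : ∀ i j, j ∈ Nb i ↔ i ∈ Nb j)
    (hV : ∀ i j, j ∈ Nb i → ∀ x y, Vd i j (x, y) = Vd j i (y, x)) (δ : ℕ → ι → E) (k : ℕ) :
    actionVariationStep Nb Ld Vd Fm Fp q δ k =
      ∑ i, (⟪forwardCoeff Nb Ld Vd Fm q k i, δ k i⟫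
        + ⟪backwardCoeff Nb Ld Fp q (k+1) i, δ (k+1) i⟫) := by
  have hpot := sum_inner_gradient_snd_eq_sum_inner_gradient_fst hNb hV (q k) (δ k)
  simp only [actionVariationStep, forwardCoeff, backwardCoeff, Nat.add_sub_cancel, inner_add_left,
    inner_sub_left, sum_inner, sum_add_distrib, sum_sub_distrib, ← mul_sum] at hpot ⊢
  rw [hpot]
  ring

theorem sum_range_actionVariationStep_eq (hNb : ∀ i j, j ∈ Nb i ↔ i ∈ Nb j)
    (hV : ∀ i j, j ∈ Nb i → ∀ x y, Vd i j (x, y) = Vd j i (y, x)) {δ : ℕ → ι → E} {N : ℕ}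
    (h0 : δ 0 = 0) (hN : δ N = 0) :
    ∑ k ∈ range N, actionVariationStep Nb Ld Vd Fm Fp q δ k =
      ∑ k ∈ Ico 1 N, ∑ i, ⟪forcedDiscreteEL Nb Ld Vd Fm Fp q k i, δ k i⟫ := by
  rw [sum_congr rfl fun k _ => (actionVariationStep_eq Ld Fm Fp q hNb hV δ k).trans sum_add_distrib,
    sum_range_add_succ_eq_sum_Ico_one (w := fun k => ∑ i, ⟪backwardCoeff Nb Ld Fp q k i, δ k i⟫)
      (by simp [h0]) (by simp [hN])]
  simp only [forcedDiscreteEL_eq_backwardCoeff_add_forwardCoeff, inner_add_left, sum_add_distrib,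
    add_comm]

end

end DiscreteMultiAgent

open DiscreteMultiAgent

theorem multiagent_forced_discrete_euler_lagrange_iff_discrete_dalembert_general
    {n s : ℕ}
    (Nb : Fin s → Finset (Fin s))
    (hNb_symm : ∀ i j, j ∈ Nb i ↔ i ∈ Nb j)
    (Ld : Fin s → EuclideanSpace ℝ (Fin n) × EuclideanSpace ℝ (Fin n) → ℝ)
    (Vd : Fin s → Fin s → EuclideanSpace ℝ (Fin n) × EuclideanSpace ℝ (Fin n) → ℝ)
    (hVdsymm : ∀ i j, j ∈ Nb i → ∀ x y, Vd i j (x, y) = Vd j i (y, x))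
    (Fm Fp : Fin s → Fin s →
      EuclideanSpace ℝ (Fin n) × EuclideanSpace ℝ (Fin n) × EuclideanSpace ℝ (Fin n) ×
        EuclideanSpace ℝ (Fin n) → EuclideanSpace ℝ (Fin n))
    (N : ℕ)
    (q : ℕ → Fin s → EuclideanSpace ℝ (Fin n)) :
    (∀ δ : ℕ → Fin s → EuclideanSpace ℝ (Fin n), δ 0 = 0 → δ N = 0 →
      ∑ k ∈ Finset.range N, ∑ i,
        (⟪gradient (fun x => Ld i (x, q (k+1) i)) (q k i), δ k i⟫
          + ⟪gradient (fun y => Ld i (q k i, y)) (q (k+1) i), δ (k+1) i⟫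
          - (1/2) * ∑ j ∈ Nb i,
              (⟪gradient (fun x => Vd i j (x, q k j)) (q k i), δ k i⟫
                + ⟪gradient (fun y => Vd i j (q k i, y)) (q k j), δ k j⟫)
          + ∑ j ∈ Nb i,
              (⟪Fm i j (q k i, q k j, q (k+1) i, q (k+1) j), δ k i⟫
                + ⟪Fp i j (q k i, q k j, q (k+1) i, q (k+1) j), δ (k+1) i⟫)) = 0)
    ↔ (∀ k : ℕ, 1 ≤ k → k ≤ N - 1 → ∀ i,
        gradient (fun y => Ld i (q (k-1) i, y)) (q k i)
          + gradient (fun x => Ld i (x, q (k+1) i)) (q k i)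
          - ∑ j ∈ Nb i, gradient (fun x => Vd i j (x, q k j)) (q k i)
          + ∑ j ∈ Nb i,
              (Fp i j (q (k-1) i, q (k-1) j, q k i, q k j)
                + Fm i j (q k i, q k j, q (k+1) i, q (k+1) j)) = 0) := by
  calc (∀ δ : ℕ → Fin s → EuclideanSpace ℝ (Fin n), δ 0 = 0 → δ N = 0 →
          ∑ k ∈ range N, actionVariationStep Nb Ld Vd Fm Fp q δ k = 0)
      ↔ ∀ δ : ℕ → Fin s → EuclideanSpace ℝ (Fin n), δ 0 = 0 → δ N = 0 →
          ∑ k ∈ Ico 1 N, ∑ i, ⟪forcedDiscreteEL Nb Ld Vd Fm Fp q k i, δ k i⟫ = 0 :=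
        forall_congr' fun δ => imp_congr_right fun h0 => imp_congr_right fun hN => by
          rw [sum_range_actionVariationStep_eq Ld Fm Fp q hNb_symm hVdsymm h0 hN]
    _ ↔ ∀ k ∈ Ico 1 N, ∀ i, forcedDiscreteEL Nb Ld Vd Fm Fp q k i = 0 :=
        forall_sum_Ico_inner_eq_zero_iff _ N
    _ ↔ _ := forall_congr' fun k => by
        rw [mem_Ico, and_imp]
        exact imp_congr_right fun hk => imp_congr (by omega) Iff.rfl

/-- Multi-agent discrete Lagrange–d'Alembert principle (stationarity of the
multi-agent discrete action sum with discrete potentials and discrete virtual work, under all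
variations fixing the endpoints) is equivalent to the multi-agent forced discrete
Euler–Lagrange equations. -/
theorem multiagent_forced_discrete_euler_lagrange_iff_discrete_dalembert
    {n s : ℕ} (hs : 2 ≤ s)
    (Nb : Fin s → Finset (Fin s))
    (hNb_irrefl : ∀ i, i ∉ Nb i)
    (hNb_symm : ∀ i j, j ∈ Nb i ↔ i ∈ Nb j)
    (Ld : Fin s → EuclideanSpace ℝ (Fin n) × EuclideanSpace ℝ (Fin n) → ℝ)
    (hLd : ∀ i, Differentiable ℝ (Ld i))
    (Vd : Fin s → Fin s → EuclideanSpace ℝ (Fin n) × EuclideanSpace ℝ (Fin n) → ℝ)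
    (hVd : ∀ i j, j ∈ Nb i → Differentiable ℝ (Vd i j))
    (hVdsymm : ∀ i j, j ∈ Nb i → ∀ x y, Vd i j (x, y) = Vd j i (y, x))
    (Fm Fp : Fin s → Fin s →
      EuclideanSpace ℝ (Fin n) × EuclideanSpace ℝ (Fin n) × EuclideanSpace ℝ (Fin n) ×
        EuclideanSpace ℝ (Fin n) → EuclideanSpace ℝ (Fin n))
    (N : ℕ) (hN : 2 ≤ N)
    (q : ℕ → Fin s → EuclideanSpace ℝ (Fin n)) :
    (∀ δ : ℕ → Fin s → EuclideanSpace ℝ (Fin n), δ 0 = 0 → δ N = 0 →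
      ∑ k ∈ Finset.range N, ∑ i,
        (⟪gradient (fun x => Ld i (x, q (k+1) i)) (q k i), δ k i⟫
          + ⟪gradient (fun y => Ld i (q k i, y)) (q (k+1) i), δ (k+1) i⟫
          - (1/2) * ∑ j ∈ Nb i,
              (⟪gradient (fun x => Vd i j (x, q k j)) (q k i), δ k i⟫
                + ⟪gradient (fun y => Vd i j (q k i, y)) (q k j), δ k j⟫)
          + ∑ j ∈ Nb i,
              (⟪Fm i j (q k i, q k j, q (k+1) i, q (k+1) j), δ k i⟫
                + ⟪Fp i j (q k i, q k j, q (k+1) i, q (k+1) j), δ (k+1) i⟫)) = 0)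
    ↔ (∀ k : ℕ, 1 ≤ k → k ≤ N - 1 → ∀ i,
        gradient (fun y => Ld i (q (k-1) i, y)) (q k i)
          + gradient (fun x => Ld i (x, q (k+1) i)) (q k i)
          - ∑ j ∈ Nb i, gradient (fun x => Vd i j (x, q k j)) (q k i)
          + ∑ j ∈ Nb i,
              (Fp i j (q (k-1) i, q (k-1) j, q k i, q k j)
                + Fm i j (q k i, q k j, q (k+1) i, q (k+1) j)) = 0) :=
  multiagent_forced_discrete_euler_lagrange_iff_discrete_dalembert_general Nb hNb_symm Ld Vd hVdsymm
    Fm Fp N q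
end

section
/- Let q = (q_1,…,q_s) : [0,T] → (ℝ^n)^s be a C² solution of the distance-based shape control system with flocking behavior: q̈_i = −Σ_{j∈N_i} [ (‖q_i−q_j‖² − d_ij²)(q_i−q_j) + (q̇_i−q̇_j) ] for every i, where d_ij = d_ji > 0. Define the total energy E(t) = Σ_{i=1}^{s} (1/2)‖q̇_i(t)‖² + (1/2) Σ_{i=1}^{s} Σ_{j∈N_i} (1/4)(‖q_i(t)−q_j(t)‖² − d_ij²)². Then for all t ∈ [0,T], E'(t) = −(1/2) Σ_{i=1}^{s} Σ_{j∈N_i} ‖q̇_i(t) − q̇_j(t)‖² ≤ 0; in particular, E is nonincreasing on [0,T]. -/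
/-!
The kinetic energy changes at rate `Σᵢ ⟪q̇ᵢ, q̈ᵢ⟫` and the potential at rate
`½ Σᵢ Σ_{j∈Nᵢ} eᵢⱼ ⟪q̇ᵢ - q̇ⱼ, qᵢ - qⱼ⟫`, where `eᵢⱼ = ‖qᵢ - qⱼ‖² - dᵢⱼ²`. Since the neighbour
relation is symmetric, a double sum `Σᵢ Σ_{j∈Nᵢ} ⟪vᵢ, wᵢⱼ⟫` with `wⱼᵢ = -wᵢⱼ` equals
`½ Σᵢ Σ_{j∈Nᵢ} ⟪vᵢ - vⱼ, wᵢⱼ⟫`. Applied to `wᵢⱼ = eᵢⱼ (qᵢ - qⱼ)`, this makes the potential rate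
cancel the shape-control force in the equation of motion; applied to `wᵢⱼ = q̇ᵢ - q̇ⱼ`, it turns
the damping term into `-½ Σᵢ Σ_{j∈Nᵢ} ‖q̇ᵢ - q̇ⱼ‖²`.
-/

open Finset
open scoped RealInnerProductSpace

noncomputable section

variable {ι E : Type*} [Fintype ι] [NormedAddCommGroup E] [InnerProductSpace ℝ E]
  {Nb : ι → Finset ι}

theorem sum_sum_neighbors_swap {M : Type*} [AddCommMonoid M]
    (hNb : ∀ i j, j ∈ Nb i ↔ i ∈ Nb j) (F : ι → ι → M) :
    ∑ i, ∑ j ∈ Nb i, F i j = ∑ i, ∑ j ∈ Nb i, F j i :=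
  sum_comm' fun i j => by simpa only [mem_univ, true_and, and_true] using hNb i j

theorem two_mul_sum_sum_inner_eq_of_antisymm (hNb : ∀ i j, j ∈ Nb i ↔ i ∈ Nb j)
    (v : ι → E) {w : ι → ι → E} (hw : ∀ i j, w j i = -w i j) :
    2 * ∑ i, ∑ j ∈ Nb i, ⟪v i, w i j⟫ = ∑ i, ∑ j ∈ Nb i, ⟪v i - v j, w i j⟫ := by
  have hswap : ∑ i, ∑ j ∈ Nb i, ⟪v i, w i j⟫ = -∑ i, ∑ j ∈ Nb i, ⟪v j, w i j⟫ := by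
    simp_rw [sum_sum_neighbors_swap hNb (fun i j => ⟪v i, w i j⟫), ← sum_neg_distrib]
    exact sum_congr rfl fun i _ => sum_congr rfl fun j _ => by rw [hw, inner_neg_right]
  simp only [inner_sub_left, sum_sub_distrib]
  linarith

def kineticEnergy (v : ι → E) : ℝ :=
  ∑ i, (1/2) * ‖v i‖^2

def potentialEnergy (Nb : ι → Finset ι) (d : ι → ι → ℝ) (x : ι → E) : ℝ :=
  (1/2) * ∑ i, ∑ j ∈ Nb i, (1/4) * (‖x i - x j‖^2 - (d i j)^2)^2

def shapeForce (Nb : ι → Finset ι) (d : ι → ι → ℝ) (x : ι → E) (i : ι) : E :=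
  ∑ j ∈ Nb i, (‖x i - x j‖^2 - (d i j)^2) • (x i - x j)

theorem hasDerivAt_kineticEnergy {v : ℝ → ι → E} {a : ι → E} {t : ℝ}
    (hv : HasDerivAt v a t) :
    HasDerivAt (fun τ => kineticEnergy (v τ)) (∑ i, ⟪v t i, a i⟫) t := by
  have hvi := hasDerivAt_pi.mp hv
  unfold kineticEnergy
  refine (HasDerivAt.fun_sum fun i _ => ((hvi i).norm_sq).const_mul (1/2)).congr_deriv ?_
  exact sum_congr rfl fun i _ => by ring

theorem hasDerivAt_potentialEnergy {d : ι → ι → ℝ} {x : ℝ → ι → E} {v : ι → E} {t : ℝ}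
    (hNb : ∀ i j, j ∈ Nb i ↔ i ∈ Nb j) (hd : ∀ i j, d i j = d j i)
    (hx : HasDerivAt x v t) :
    HasDerivAt (fun τ => potentialEnergy Nb d (x τ))
      (∑ i, ⟪v i, shapeForce Nb d (x t) i⟫) t := by
  have hxi := hasDerivAt_pi.mp hx
  set X : ι → ι → ℝ := fun i j => ‖x t i - x t j‖^2 - (d i j)^2
  have hterm : ∀ i j, HasDerivAt (fun τ => (1/4) * (‖x τ i - x τ j‖^2 - (d i j)^2)^2)
      (X i j * ⟪v i - v j, x t i - x t j⟫) t := fun i j => by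
    refine ((((hxi i).fun_sub (hxi j)).norm_sq.sub_const _).pow 2).const_mul _ |>.congr_deriv ?_
    rw [real_inner_comm]
    push_cast
    ring
  have hpair := two_mul_sum_sum_inner_eq_of_antisymm hNb v
    (w := fun i j => X i j • (x t i - x t j)) fun i j => by
      simp only [X, hd j i, norm_sub_rev (x t j), ← smul_neg, neg_sub]
  unfold potentialEnergy
  refine ((HasDerivAt.fun_sum fun i _ => HasDerivAt.fun_sum fun j _ => hterm i j).const_mul
    (1/2)).congr_deriv ?_
  simp only [shapeForce, inner_sum, real_inner_smul_right] at hpair ⊢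
  linarith

theorem hasDerivAt_energy_of_flocking {d : ι → ι → ℝ} {x v : ℝ → ι → E} {a : ι → E} {t : ℝ}
    (hNb : ∀ i j, j ∈ Nb i ↔ i ∈ Nb j) (hd : ∀ i j, d i j = d j i)
    (hx : HasDerivAt x (v t) t) (hv : HasDerivAt v a t)
    (ha : ∀ i, a i = -∑ j ∈ Nb i,
      ((‖x t i - x t j‖^2 - (d i j)^2) • (x t i - x t j) + (v t i - v t j))) :
    HasDerivAt (fun τ => kineticEnergy (v τ) + potentialEnergy Nb d (x τ))
      (-(1/2) * ∑ i, ∑ j ∈ Nb i, ‖v t i - v t j‖^2) t := by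
  refine ((hasDerivAt_kineticEnergy hv).add
    (hasDerivAt_potentialEnergy hNb hd hx)).congr_deriv ?_
  have hpair := two_mul_sum_sum_inner_eq_of_antisymm hNb (v t)
    (w := fun i j => v t i - v t j) fun i j => (neg_sub _ _).symm
  simp only [ha, shapeForce, inner_neg_right, inner_sum, inner_add_right, neg_add, sum_add_distrib, sum_neg_distrib,
    real_inner_self_eq_norm_sq] at hpair ⊢
  linarith

end

theorem energy_dissipation_shape_control_flocking_general
    {n s : ℕ}
    (Nb : Fin s → Finset (Fin s))
    (hNb_symm : ∀ i j, j ∈ Nb i ↔ i ∈ Nb j)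
    (d : Fin s → Fin s → ℝ)
    (hd_symm : ∀ i j, d i j = d j i)
    (T : ℝ)
    (q : ℝ → Fin s → EuclideanSpace ℝ (Fin n)) (hq : ContDiff ℝ 2 q)
    (hODE : ∀ i, ∀ t ∈ Set.Icc (0:ℝ) T,
      deriv (deriv q) t i
        = -∑ j ∈ Nb i,
            ((‖q t i - q t j‖^2 - (d i j)^2) • (q t i - q t j)
              + (deriv q t i - deriv q t j))) :
    (∀ t ∈ Set.Icc (0:ℝ) T,
      deriv (fun τ => ∑ i, (1/2) * ‖deriv q τ i‖^2
          + (1/2) * ∑ i, ∑ j ∈ Nb i, (1/4) * (‖q τ i - q τ j‖^2 - (d i j)^2)^2) t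
        = -(1/2) * ∑ i, ∑ j ∈ Nb i, ‖deriv q t i - deriv q t j‖^2
      ∧ -(1/2) * ∑ i, ∑ j ∈ Nb i, ‖deriv q t i - deriv q t j‖^2 ≤ 0)
    ∧ AntitoneOn (fun t => ∑ i, (1/2) * ‖deriv q t i‖^2
        + (1/2) * ∑ i, ∑ j ∈ Nb i, (1/4) * (‖q t i - q t j‖^2 - (d i j)^2)^2)
        (Set.Icc (0:ℝ) T) := by
  have hE : ∀ t ∈ Set.Icc 0 T,
      HasDerivAt (fun τ => kineticEnergy (deriv q τ) + potentialEnergy Nb d (q τ))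
        (-(1/2) * ∑ i, ∑ j ∈ Nb i, ‖deriv q t i - deriv q t j‖^2) t := fun t ht =>
    hasDerivAt_energy_of_flocking hNb_symm hd_symm
      ((hq.differentiable two_ne_zero) t).hasDerivAt
      (hq.differentiable_deriv_two t).hasDerivAt fun i => hODE i t ht
  have hdiss : ∀ t, -(1/2) * ∑ i, ∑ j ∈ Nb i, ‖deriv q t i - deriv q t j‖^2 ≤ 0 := fun t =>
    mul_nonpos_of_nonpos_of_nonneg (by norm_num)
      (sum_nonneg fun i _ => sum_nonneg fun j _ => sq_nonneg _)
  refine ⟨fun t ht => ⟨(hE t ht).deriv, hdiss t⟩, ?_⟩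
  exact antitoneOn_of_hasDerivWithinAt_nonpos (convex_Icc 0 T)
    (fun t ht => (hE t ht).continuousAt.continuousWithinAt)
    (fun t ht => (hE t (interior_subset ht)).hasDerivWithinAt) fun t _ => hdiss t

/-- Along any C² solution of the distance-based shape control system with flocking
behavior, the total energy `E(t) = Σᵢ ½‖q̇ᵢ‖² + ½ Σᵢ Σ_{j∈N_i} ¼(‖qᵢ−q_j‖² − d_ij²)²` satisfies
`E'(t) = −½ Σᵢ Σ_{j∈N_i} ‖q̇ᵢ − q̇_j‖² ≤ 0`; in particular `E` is nonincreasing on `[0,T]`. -/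
theorem energy_dissipation_shape_control_flocking
    {n s : ℕ} (hs : 2 ≤ s)
    (Nb : Fin s → Finset (Fin s))
    (hNb_irrefl : ∀ i, i ∉ Nb i)
    (hNb_symm : ∀ i j, j ∈ Nb i ↔ i ∈ Nb j)
    (d : Fin s → Fin s → ℝ)
    (hd_symm : ∀ i j, d i j = d j i)
    (hd_pos : ∀ i j, j ∈ Nb i → 0 < d i j)
    (T : ℝ) (hT : 0 < T)
    (q : ℝ → Fin s → EuclideanSpace ℝ (Fin n)) (hq : ContDiff ℝ 2 q)
    (hODE : ∀ i, ∀ t ∈ Set.Icc (0:ℝ) T,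
      deriv (deriv q) t i
        = -∑ j ∈ Nb i,
            ((‖q t i - q t j‖^2 - (d i j)^2) • (q t i - q t j)
              + (deriv q t i - deriv q t j))) :
    (∀ t ∈ Set.Icc (0:ℝ) T,
      deriv (fun τ => ∑ i, (1/2) * ‖deriv q τ i‖^2
          + (1/2) * ∑ i, ∑ j ∈ Nb i, (1/4) * (‖q τ i - q τ j‖^2 - (d i j)^2)^2) t
        = -(1/2) * ∑ i, ∑ j ∈ Nb i, ‖deriv q t i - deriv q t j‖^2
      ∧ -(1/2) * ∑ i, ∑ j ∈ Nb i, ‖deriv q t i - deriv q t j‖^2 ≤ 0)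
    ∧ AntitoneOn (fun t => ∑ i, (1/2) * ‖deriv q t i‖^2
        + (1/2) * ∑ i, ∑ j ∈ Nb i, (1/4) * (‖q t i - q t j‖^2 - (d i j)^2)^2)
        (Set.Icc (0:ℝ) T) :=
  energy_dissipation_shape_control_flocking_general Nb hNb_symm d hd_symm T q hq hODE
end

section
/- Let G be a finite simple graph on vertices {1,…,s} with Laplacian L, let n ≥ 1, h > 0, and write L̄ = L ⊗ I_n. Suppose d_ij = d_ji > 0 for neighbors, and define Γ : (ℝ^n)^s → (ℝ^n)^s by letting the i-th block of Γ(q) be Σ_{j∈N_i} (‖q_i − q_j‖² − d_ij²)(q_i − q_j). Let (q_k)_{k≥0} be a sequence in (ℝ^n)^s satisfying the variational-integrator update (I + hL̄) q_{k+1} = 2 q_k − (I − hL̄) q_{k−1} − (h²/2) Γ(q_k) for all k ≥ 1. Then the discrete total linear momentum is conserved: Σ_{i=1}^{s} (q_{k+1}^i − q_k^i) = Σ_{i=1}^{s} (q_1^i − q_0^i) for all k ≥ 0; equivalently, Σ_{i=1}^{s} q_k^i = Σ_{i=1}^{s} q_0^i + k Σ_{i=1}^{s} (q_1^i − q_0^i)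 for all k ≥ 0. -/
open Matrix
open scoped Kronecker

/-!
Summing the update over all agents, the Laplacian terms drop out because the columns of `L`
sum to zero, and the control terms cancel in pairs because each summand of `Γ` is antisymmetric
in the edge `(i, j)`. Hence the total position `Qₖ = Σᵢ qₖⁱ` satisfies `Qₖ₊₁ - 2Qₖ + Qₖ₋₁ = 0`,
i.e. it is an arithmetic progression.
-/

namespace SimpleGraph

variable {V : Type*} [Fintype V] (G : SimpleGraph V) [DecidableRel G.Adj]

theorem lapMatrix_apply [DecidableEq V] {R : Type*} [AddGroupWithOne R] (i j : V) :
    G.lapMatrix R i j = if i = j then (G.degree i : R) else if G.Adj i j then -1 else 0 := by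
  by_cases hij : i = j
  · subst hij; simp [lapMatrix, degMatrix]
  · by_cases hadj : G.Adj i j <;> simp [lapMatrix, degMatrix, adjMatrix_apply, hij, hadj]

theorem sum_lapMatrix_apply_eq_zero [DecidableEq V] {R : Type*} [NonAssocRing R] (j : V) :
    ∑ i, G.lapMatrix R i j = 0 := by
  simpa [mulVec, dotProduct, (G.isSymm_lapMatrix (R := R)).apply j] using
    congrFun (G.lapMatrix_mulVec_const_eq_zero (R := R)) j

theorem sum_sum_neighborFinset_eq_zero {M : Type*} [AddCommMonoid M] (f : V → V → M)
    (hf : ∀ i j, G.Adj i j → f i j + f j i = 0) :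
    ∑ i, ∑ j ∈ G.neighborFinset i, f i j = 0 := by
  have hpairs : ∑ i, ∑ j ∈ G.neighborFinset i, f i j
      = ∑ p : V × V, if G.Adj p.1 p.2 then f p.1 p.2 else 0 := by
    simp [Fintype.sum_prod_type, neighborFinset_eq_filter, Finset.sum_filter]
  rw [hpairs]
  refine Finset.sum_ninvolution Prod.swap (fun p => ?_) (fun p hp => ?_)
    (fun _ => Finset.mem_univ _) Prod.swap_swap
  · by_cases hadj : G.Adj p.1 p.2
    · simp [hadj, hadj.symm, hf p.1 p.2 hadj]
    · simp [hadj, G.adj_comm p.2 p.1]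
  · have hadj : G.Adj p.1 p.2 := by by_contra h; simp [h] at hp
    exact fun hswap => hadj.ne (congrArg Prod.snd hswap)

end SimpleGraph

namespace Matrix

variable {ι m R : Type*} [Fintype ι] [Fintype m] [DecidableEq m] [NonAssocSemiring R]

theorem kronecker_one_mulVec_apply (A : Matrix ι ι R) (v : ι × m → R) (i : ι) (c : m) :
    ((A ⊗ₖ (1 : Matrix m m R)) *ᵥ v) (i, c) = ∑ j, A i j * v (j, c) := by
  simp [mulVec, dotProduct, Fintype.sum_prod_type, one_apply]

theorem sum_kronecker_one_mulVec_eq_zero {A : Matrix ι ι R} (hA : ∀ j, ∑ i, A i j = 0)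
    (v : ι × m → R) (c : m) :
    ∑ i, ((A ⊗ₖ (1 : Matrix m m R)) *ᵥ v) (i, c) = 0 := by
  simp_rw [kronecker_one_mulVec_apply]
  rw [Finset.sum_comm]
  simp [← Finset.sum_mul, hA]

end Matrix

section ArithmeticProgression

variable {M : Type*} [AddCommGroup M] {x : ℕ → M}

theorem succ_sub_eq_one_sub_zero (hx : ∀ k, x (k + 2) - x (k + 1) = x (k + 1) - x k)
    (k : ℕ) : x (k + 1) - x k = x 1 - x 0 := by
  induction k with
  | zero => rfl
  | succ k ih => rw [hx, ih]

theorem eq_add_nsmul_one_sub_zero (hx : ∀ k, x (k + 2) - x (k + 1) = x (k + 1) - x k)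
    (k : ℕ) : x k = x 0 + k • (x 1 - x 0) := by
  induction k with
  | zero => simp
  | succ k ih =>
    rw [succ_nsmul, ← add_assoc, ← ih, ← succ_sub_eq_one_sub_zero hx k]
    abel

end ArithmeticProgression

theorem variational_integrator_discrete_momentum_conservation_general
    {n s : ℕ}
    (G : SimpleGraph (Fin s)) [DecidableRel G.Adj]
    (Lap : Matrix (Fin s) (Fin s) ℝ)
    (hLap : ∀ i j : Fin s,
      Lap i j = if i = j then (G.degree i : ℝ) else if G.Adj i j then -1 else 0)
    (h : ℝ)
    (d : Fin s → Fin s → ℝ)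
    (hd_symm : ∀ i j, d i j = d j i)
    (q : ℕ → Fin s → EuclideanSpace ℝ (Fin n))
    (hupdate : ∀ k : ℕ, 1 ≤ k → ∀ p : Fin s × Fin n,
      ((1 : Matrix (Fin s × Fin n) (Fin s × Fin n) ℝ)
          + h • (Lap ⊗ₖ (1 : Matrix (Fin n) (Fin n) ℝ))).mulVec
          (fun p' => q (k+1) p'.1 p'.2) p
        = 2 * q k p.1 p.2
          - ((1 : Matrix (Fin s × Fin n) (Fin s × Fin n) ℝ)
              - h • (Lap ⊗ₖ (1 : Matrix (Fin n) (Fin n) ℝ))).mulVec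
              (fun p' => q (k-1) p'.1 p'.2) p
          - (h^2/2) * ∑ j ∈ G.neighborFinset p.1,
              (‖q k p.1 - q k j‖^2 - (d p.1 j)^2) * (q k p.1 p.2 - q k j p.2)) :
    (∀ k : ℕ, ∑ i, (q (k+1) i - q k i) = ∑ i, (q 1 i - q 0 i))
    ∧ (∀ k : ℕ, ∑ i, q k i = ∑ i, q 0 i + (k : ℝ) • ∑ i, (q 1 i - q 0 i)) := by
  have hLap_col : ∀ j, ∑ i, Lap i j = 0 := by
    have : Lap = G.lapMatrix ℝ := Matrix.ext fun i j => by rw [hLap, G.lapMatrix_apply]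
    exact this ▸ G.sum_lapMatrix_apply_eq_zero
  have hcontrol : ∀ k c, ∑ i, ∑ j ∈ G.neighborFinset i,
      (‖q k i - q k j‖^2 - (d i j)^2) * (q k i c - q k j c) = 0 := fun k c =>
    G.sum_sum_neighborFinset_eq_zero _ fun i j _ => by rw [norm_sub_rev (q k j), hd_symm j]; ring
  have hcoord : ∀ k c, ∑ i, q (k + 2) i c = 2 * ∑ i, q (k + 1) i c - ∑ i, q k i c := by
    intro k c
    have hsum := Finset.sum_congr rfl fun i (_ : i ∈ Finset.univ) =>
      hupdate (k + 1) (Nat.le_add_left 1 k) (i, c)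
    simp only [add_mulVec, sub_mulVec, one_mulVec, smul_mulVec, Pi.add_apply, Pi.sub_apply,
      Pi.smul_apply, smul_eq_mul, Finset.sum_add_distrib, Finset.sum_sub_distrib,
      ← Finset.mul_sum, sum_kronecker_one_mulVec_eq_zero hLap_col, hcontrol] at hsum
    simpa using hsum
  have htotal : ∀ k, ∑ i, q (k + 2) i - ∑ i, q (k + 1) i = ∑ i, q (k + 1) i - ∑ i, q k i := by
    intro k
    ext c
    simp only [PiLp.sub_apply, WithLp.ofLp_sum, Finset.sum_apply, hcoord]
    ring
  refine ⟨fun k => ?_, fun k => ?_⟩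
  · simpa only [Finset.sum_sub_distrib] using
      succ_sub_eq_one_sub_zero (x := fun k => ∑ i, q k i) htotal k
  · simpa only [Nat.cast_smul_eq_nsmul, Finset.sum_sub_distrib] using
      eq_add_nsmul_one_sub_zero (x := fun k => ∑ i, q k i) htotal k

/-- The explicit forced variational-integrator update
`(I + hL̄) q_{k+1} = 2 q_k − (I − hL̄) q_{k−1} − (h²/2) Γ(q_k)` (with `L̄ = L ⊗ Iₙ` built from the
graph Laplacian, and `Γ` the stacked distance-based control terms) conserves the discrete total
linear momentum: `Σᵢ (q_{k+1}ⁱ − q_kⁱ) = Σᵢ (q₁ⁱ − q₀ⁱ)` for all `k`; equivalently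
`Σᵢ q_kⁱ = Σᵢ q₀ⁱ + k Σᵢ (q₁ⁱ − q₀ⁱ)`. -/
theorem variational_integrator_discrete_momentum_conservation
    {n s : ℕ} (hn : 1 ≤ n)
    (G : SimpleGraph (Fin s)) [DecidableRel G.Adj]
    (Lap : Matrix (Fin s) (Fin s) ℝ)
    (hLap : ∀ i j : Fin s,
      Lap i j = if i = j then (G.degree i : ℝ) else if G.Adj i j then -1 else 0)
    (h : ℝ) (hh : 0 < h)
    (d : Fin s → Fin s → ℝ)
    (hd_symm : ∀ i j, d i j = d j i)
    (hd_pos : ∀ i j, G.Adj i j → 0 < d i j)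
    (q : ℕ → Fin s → EuclideanSpace ℝ (Fin n))
    (hupdate : ∀ k : ℕ, 1 ≤ k → ∀ p : Fin s × Fin n,
      ((1 : Matrix (Fin s × Fin n) (Fin s × Fin n) ℝ)
          + h • (Lap ⊗ₖ (1 : Matrix (Fin n) (Fin n) ℝ))).mulVec
          (fun p' => q (k+1) p'.1 p'.2) p
        = 2 * q k p.1 p.2
          - ((1 : Matrix (Fin s × Fin n) (Fin s × Fin n) ℝ)
              - h • (Lap ⊗ₖ (1 : Matrix (Fin n) (Fin n) ℝ))).mulVec
              (fun p' => q (k-1) p'.1 p'.2) p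
          - (h^2/2) * ∑ j ∈ G.neighborFinset p.1,
              (‖q k p.1 - q k j‖^2 - (d p.1 j)^2) * (q k p.1 p.2 - q k j p.2)) :
    (∀ k : ℕ, ∑ i, (q (k+1) i - q k i) = ∑ i, (q 1 i - q 0 i))
    ∧ (∀ k : ℕ, ∑ i, q k i = ∑ i, q 0 i + (k : ℝ) • ∑ i, (q 1 i - q 0 i)) :=
  variational_integrator_discrete_momentum_conservation_general G Lap hLap h d hd_symm q hupdate
end
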